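/- Let (V, dist) be a finite metric space with |V| ≥ k ≥ 1. The greedy k-center algorithm—initialize C₁ = {p} for some p ∈ V, and at each step add the point maximizing its distance to the current set (argmax over v ∉ C of min_{c∈C} dist(v,c))—produces a set C_k of size k whose covering radius r(C_k) = max_{v∈V} min_{c∈C_k} dist(v,c) is at most twice the optimal k-center radius: r(C_k) ≤ 2·min_{S⊆V, |S|=k} r(S). -/
import Mathlib


/-- The covering radius of a set of centers `S` in a finite metric space. -/
noncomputable def covRadius {V : Type*} [MetricSpace V] [Fintype V]
    (S : Finset V) : ℝ :=
  ⨆ v : V, ⨅ s : S, dist v (s : V)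

/-- Gonzalez's greedy k-center algorithm is a 2-approximation: the covering
radius of the greedily chosen centers is at most twice the optimal radius. -/
theorem greedy_kcenter_two_approx {V : Type*} [MetricSpace V] [Fintype V]
    [Nonempty V] [DecidableEq V] {k : ℕ} (hk : 1 ≤ k) (hkV : k ≤ Fintype.card V)
    (c : Fin k → V) (hinj : Function.Injective c)
    (hgreedy : ∀ t : Fin k, ∀ v : V, (∀ s : Fin k, s < t → c s ≠ v) →
      (⨅ s : {s : Fin k // s < t}, dist v (c s))
        ≤ ⨅ s : {s : Fin k // s < t}, dist (c t) (c s)) :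
    covRadius (Finset.univ.image c)
      ≤ 2 * ⨅ S : {S : Finset V // S.card = k}, covRadius (S : Finset V) := by
  classical
  set C : Finset V := Finset.univ.image c with hC
  have hCcard : C.card = k := by
    rw [hC, Finset.card_image_of_injective _ hinj, Finset.card_univ, Fintype.card_fin]
  have bddB : ∀ (w : V) (T : Finset V),
      BddBelow (Set.range fun s : T => dist w (s : V)) := by
    intro w T
    exact ⟨0, by rintro x ⟨s, rfl⟩; exact dist_nonneg⟩
  have bddB' : ∀ (w : V) (t : Fin k),
      BddBelow (Set.range fun s : {s : Fin k // s < t} => dist w (c s)) := by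
    intro w t
    exact ⟨0, by rintro x ⟨s, rfl⟩; exact dist_nonneg⟩
  have key : ∀ S : Finset V, S.card = k → covRadius C ≤ 2 * covRadius S := by
    intro S hS
    have hSne : S.Nonempty := Finset.card_pos.mp (by omega)
    have hSne' : Nonempty S := hSne.to_subtype
    have hrS : 0 ≤ covRadius S := by
      obtain ⟨v0⟩ := ‹Nonempty V›
      have h1 : (0:ℝ) ≤ ⨅ s : S, dist v0 (s : V) := le_ciInf fun s => dist_nonneg
      refine h1.trans ?_
      rw [covRadius]
      exact le_ciSup (f := fun w : V => ⨅ s : S, dist w (s : V))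
        (Set.Finite.bddAbove (Set.finite_range _)) v0
    have hnear : ∀ x : V, ∃ s ∈ S, dist x s ≤ covRadius S := by
      intro x
      obtain ⟨s, hsS, hmin⟩ := S.exists_min_image (fun s => dist x s) hSne
      refine ⟨s, hsS, ?_⟩
      have h1 : dist x s ≤ ⨅ t : S, dist x (t : V) := le_ciInf fun t => hmin t t.2
      refine h1.trans ?_
      rw [covRadius]
      exact le_ciSup (f := fun w : V => ⨅ s : S, dist w (s : V))
        (Set.Finite.bddAbove (Set.finite_range _)) x
    choose φ hφS hφd using hnear
    rw [covRadius]
    apply ciSup_le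
    intro v
    by_cases hvC : v ∈ C
    · have h0 : (⨅ s : C, dist v (s : V)) ≤ dist v v :=
        ciInf_le (bddB v C) (⟨v, hvC⟩ : C)
      rw [dist_self] at h0
      linarith
    · set rv := ⨅ s : C, dist v (s : V) with hrv
      have hrv_le : ∀ x ∈ C, rv ≤ dist v x := by
        intro x hx
        exact ciInf_le (bddB v C) (⟨x, hx⟩ : C)
      have hcc : ∀ i j : Fin k, i < j → rv ≤ dist (c i) (c j) := by
        intro i j hij
        have hne : Nonempty {s : Fin k // s < j} := ⟨⟨i, hij⟩⟩
        have h1 : rv ≤ ⨅ s : {s : Fin k // s < j}, dist v (c s) :=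
          le_ciInf fun s =>
            hrv_le (c s) (Finset.mem_image_of_mem c (Finset.mem_univ _))
        have h2 := hgreedy j v (fun s _ hs =>
          hvC (hs ▸ Finset.mem_image_of_mem c (Finset.mem_univ s)))
        have h3 : (⨅ s : {s : Fin k // s < j}, dist (c j) (c s)) ≤ dist (c j) (c i) :=
          ciInf_le (bddB' (c j) j) ⟨i, hij⟩
        rw [dist_comm (c i) (c j)]
        linarith
      have hpair : ∀ x ∈ insert v C, ∀ y ∈ insert v C, x ≠ y → rv ≤ dist x y := by
        intro x hx y hy hxy
        rcases Finset.mem_insert.mp hx with rfl | hxC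
        · rcases Finset.mem_insert.mp hy with rfl | hyC
          · exact absurd rfl hxy
          · exact hrv_le y hyC
        · rcases Finset.mem_insert.mp hy with rfl | hyC
          · rw [dist_comm]; exact hrv_le x hxC
          · obtain ⟨i, _, rfl⟩ := Finset.mem_image.mp hxC
            obtain ⟨j, _, rfl⟩ := Finset.mem_image.mp hyC
            have hij : i ≠ j := fun h => hxy (by rw [h])
            rcases lt_or_gt_of_ne hij with h | h
            · exact hcc i j h
            · rw [dist_comm]; exact hcc j i h
      have hcard : S.card < (insert v C).card := by
        rw [Finset.card_insert_of_notMem hvC, hCcard, hS]; omega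
      obtain ⟨x, hx, y, hy, hxy, hφeq⟩ :=
        Finset.exists_ne_map_eq_of_card_lt_of_maps_to hcard (fun a _ => hφS a)
      have h1 : rv ≤ dist x y := hpair x hx y hy hxy
      have h2 : dist x y ≤ dist x (φ x) + dist (φ y) y := by
        calc dist x y ≤ dist x (φ x) + dist (φ x) y := dist_triangle _ _ _
          _ = dist x (φ x) + dist (φ y) y := by rw [hφeq]
      have h3 : dist x (φ x) ≤ covRadius S := hφd x
      have h4 : dist (φ y) y ≤ covRadius S := by rw [dist_comm]; exact hφd y
      linarith
  have hne : Nonempty {S : Finset V // S.card = k} := by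
    obtain ⟨S, _, hScard⟩ := Finset.exists_subset_card_eq
      (s := (Finset.univ : Finset V)) (n := k) (by simpa using hkV)
    exact ⟨⟨S, hScard⟩⟩
  have h2 : covRadius C / 2 ≤ ⨅ S : {S : Finset V // S.card = k},
      covRadius (S : Finset V) :=
    le_ciInf fun S => by have := key S S.2; linarith
  linarith
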